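/- Let A be a real n×n matrix all of whose (complex) eigenvalues have negative real part, and let k ≥ 1. Then the matrix-valued integral ∫₀^∞ exp(tA) ⊗ ⋯ ⊗ exp(tA) dt (k Kronecker factors) converges, and L_k(A)^{-1} = − ∫₀^∞ exp(tA) ⊗ ⋯ ⊗ exp(tA) dt. -/

import Mathlib

open Matrix MeasureTheory
open scoped BigOperators Nat RealInnerProductSpace

noncomputable section

namespace LPO

/-- Multi-index representation of an index of `ℝ^{n^k}`. -/
def mi {n k : ℕ} (m : Fin (n ^ k)) : Fin k → Fin n :=
  finFunctionFinEquiv.symm m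

/-- The Kronecker product `u₁ ⊗ ⋯ ⊗ u_k ∈ ℝ^{n^k}` of `k` vectors in `ℝ^n`. -/
def vkronFam (n k : ℕ) (u : Fin k → Fin n → ℝ) : Fin (n ^ k) → ℝ :=
  fun m => ∏ i, u i (mi m i)

/-- The `k`-fold Kronecker power `x ⊗ ⋯ ⊗ x ∈ ℝ^{n^k}` of `x ∈ ℝ^n`. -/
def kpow {n : ℕ} (x : Fin n → ℝ) (k : ℕ) : Fin (n ^ k) → ℝ :=
  fun m => ∏ i, x (mi m i)

/-- Kronecker product `ℝ^{n^a} × ℝ^{n^b} → ℝ^{n^(a+b)}`. -/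
def vkron {n a b : ℕ} (u : Fin (n ^ a) → ℝ) (v : Fin (n ^ b) → ℝ) :
    Fin (n ^ (a + b)) → ℝ :=
  fun m =>
    u (finFunctionFinEquiv fun i => mi m (Fin.castAdd b i)) *
      v (finFunctionFinEquiv fun i => mi m (Fin.natAdd a i))

/-- Cast `ℝ^{n^a} → ℝ^{n^b}` along a proof that `a = b`. -/
def vcast {n a b : ℕ} (h : a = b) (v : Fin (n ^ a) → ℝ) : Fin (n ^ b) → ℝ :=
  fun m => v (Fin.cast (by rw [h]) m)

/-- Kronecker product of `k` (square, equally sized) matrices. -/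
def mkron {n : ℕ} (k : ℕ) (M : Fin k → Matrix (Fin n) (Fin n) ℝ) :
    Matrix (Fin (n ^ k)) (Fin (n ^ k)) ℝ :=
  Matrix.of fun p q => ∏ i, M i (mi p i) (mi q i)

/-- `k`-fold Kronecker power of an `n × r` matrix. -/
def mkronRect {n r : ℕ} (k : ℕ) (Q : Matrix (Fin n) (Fin r) ℝ) :
    Matrix (Fin (n ^ k)) (Fin (r ^ k)) ℝ :=
  Matrix.of fun p q => ∏ i, Q (mi p i) (mi q i)

/-- `L_k(A) = Σ_{j=1}^k I ⊗ ⋯ ⊗ I ⊗ A ⊗ I ⊗ ⋯ ⊗ I` with `A` in the `j`-th slot. -/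
def LkMat {n : ℕ} (A : Matrix (Fin n) (Fin n) ℝ) (k : ℕ) :
    Matrix (Fin (n ^ k)) (Fin (n ^ k)) ℝ :=
  ∑ j : Fin k, mkron k fun i => if i = j then A else 1

/-- All complex eigenvalues of the real matrix `A` have negative real part. -/
def StableMat {n : ℕ} (A : Matrix (Fin n) (Fin n) ℝ) : Prop :=
  ∀ z : ℂ, (A.map (algebraMap ℝ ℂ)).charpoly.IsRoot z → z.re < 0

/-- The mode-permutation operator `P_τ` on `ℝ^{n^k}`, characterized by
`P_τ (u₁ ⊗ ⋯ ⊗ u_k) = u_{τ(1)} ⊗ ⋯ ⊗ u_{τ(k)}`. -/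
def permVec {n k : ℕ} (τ : Equiv.Perm (Fin k)) (w : Fin (n ^ k) → ℝ) :
    Fin (n ^ k) → ℝ :=
  fun m => w (finFunctionFinEquiv (mi m ∘ ⇑τ⁻¹))

/-- `w ∈ ℝ^{n^k}` has Kronecker (CP) rank at most `R`. -/
def KrankLe {n k : ℕ} (w : Fin (n ^ k) → ℝ) (R : ℕ) : Prop :=
  ∃ u : Fin R → Fin k → Fin n → ℝ, w = ∑ j, vkronFam n k (u j)

/-- The right-hand side `C_k = -Σ_{i=1}^{k-1} c_i ⊗ c_{k-i}` of the linear system for `w_k`. -/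
def Cvec {n : ℕ} (c : (i : ℕ) → Fin (n ^ i) → ℝ) (k : ℕ) : Fin (n ^ k) → ℝ :=
  -(∑ i ∈ (Finset.Icc 1 (k - 1)).attach,
      vcast (show i.1 + (k - i.1) = k from by
          have := Finset.mem_Icc.mp i.2; omega)
        (vkron (c i.1) (c (k - i.1))))

/-- Euclidean norm on `ℝ^N`. -/
def enorm {N : ℕ} (v : Fin N → ℝ) : ℝ := Real.sqrt (v ⬝ᵥ v)

/-- Spectral norm of a complex matrix: the operator norm of the induced map between
Euclidean spaces. -/
def specNorm {m : ℕ} (M : Matrix (Fin m) (Fin m) ℂ) : ℝ :=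
  ‖LinearMap.toContinuousLinearMap (Matrix.toEuclideanLin M)‖

/-- Euclidean ball of radius `L` in `ℝ^n`. -/
def eball (n : ℕ) (L : ℝ) : Set (Fin n → ℝ) := {x | x ⬝ᵥ x ≤ L ^ 2}

/-- Square matricization `ℝ^{n^{2κ}} → ℝ^{n^κ × n^κ}`, characterized by
`(u₁⊗⋯⊗u_κ)ᵀ W (v₁⊗⋯⊗v_κ) = wᵀ (u₁⊗⋯⊗u_κ⊗v₁⊗⋯⊗v_κ)`. -/
def sqMatz {n κ : ℕ} (w : Fin (n ^ (2 * κ)) → ℝ) :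
    Matrix (Fin (n ^ κ)) (Fin (n ^ κ)) ℝ :=
  Matrix.of fun p q =>
    w (Fin.cast (show n ^ (κ + κ) = n ^ (2 * κ) from by rw [two_mul])
        (finFunctionFinEquiv (Fin.append (mi p) (mi q))))

end LPO

namespace LPO

/-- The low-rank right-hand side `C̃_k` (Lemma on minimal Kronecker rank). -/
def Ctil {n : ℕ} (c : (i : ℕ) → Fin (n ^ i) → ℝ) (k : ℕ) : Fin (n ^ k) → ℝ :=
  if hk : k % 2 = 1 then
    (2 : ℝ) • ∑ i ∈ (Finset.Icc 1 (k / 2)).attach,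
      vcast (show i.1 + (k - i.1) = k from by
          have := Finset.mem_Icc.mp i.2; omega)
        (vkron (c i.1) (c (k - i.1)))
  else
    vcast (show k / 2 + k / 2 = k from by omega)
        (vkron (c (k / 2)) (c (k / 2)))
      + (2 : ℝ) • ∑ i ∈ (Finset.Icc 1 (k / 2 - 1)).attach,
          vcast (show i.1 + (k - i.1) = k from by
              have := Finset.mem_Icc.mp i.2; omega)
            (vkron (c i.1) (c (k - i.1)))

/-- Quadrature step size `h_st = π / √ℓ`. -/
def quadStep (ℓ : ℕ) : ℝ := Real.pi / Real.sqrt ℓ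

/-- Quadrature node `α_i`. -/
def quadNode (k : ℕ) (lmin : ℝ) (ℓ : ℕ) (i : ℤ) : ℝ :=
  Real.log (Real.exp (i * quadStep ℓ) +
      Real.sqrt (1 + Real.exp (2 * i * quadStep ℓ))) / (k * lmin)

/-- Quadrature weight `ω_i`. -/
def quadWeight (k : ℕ) (lmin : ℝ) (ℓ : ℕ) (i : ℤ) : ℝ :=
  quadStep ℓ / (Real.sqrt (1 + Real.exp (-2 * i * quadStep ℓ)) * (k * lmin))

/-- The quadrature-based approximation
`x_ℓ = -Σ_{i=-ℓ}^{ℓ} ω_i (exp(α_i A) ⊗ ⋯ ⊗ exp(α_i A)) b`. -/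
def quadApprox {n : ℕ} (A : Matrix (Fin n) (Fin n) ℝ) (k : ℕ) (lmin : ℝ) (ℓ : ℕ)
    (b : Fin (n ^ k) → ℝ) : Fin (n ^ k) → ℝ :=
  -(∑ i ∈ Finset.Icc (-(ℓ : ℤ)) (ℓ : ℤ),
      quadWeight k lmin ℓ i •
        (mkron k (fun _ => NormedSpace.exp (quadNode k lmin ℓ i • A)) *ᵥ b))

end LPO

/-!
Since `L_k(A) = ∑ⱼ 1 ⊗ ⋯ ⊗ A ⊗ ⋯ ⊗ 1` is a sum of commuting slot embeddings of `A`,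
`exp (t L_k(A)) = exp (tA) ⊗ ⋯ ⊗ exp (tA)`. The spectrum of `exp A` lies in `exp (σ(A))`, hence
inside the open unit disc, so by Gelfand's formula `‖exp (mA)‖ < 1` for some `m ≥ 1`; this makes the
entries of `exp (tA)`, and therefore those of `exp (t L_k(A))`, decay exponentially. Integrating
`d/dt exp (tL) = L exp (tL)` over `(0, ∞)` then gives `L ∫₀^∞ exp (tL) dt = -1`.
-/

namespace LPO

open Filter Topology Asymptotics

section Kronecker

variable {n k : ℕ}

lemma mi_finFunctionFinEquiv (f : Fin k → Fin n) : mi (finFunctionFinEquiv f) = f :=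
  finFunctionFinEquiv.symm_apply_apply f

lemma mi_injective : Function.Injective (mi : Fin (n ^ k) → Fin k → Fin n) :=
  finFunctionFinEquiv.symm.injective

lemma mkron_mul (M N : Fin k → Matrix (Fin n) (Fin n) ℝ) :
    mkron k M * mkron k N = mkron k fun i => M i * N i := by
  ext p q
  rw [mul_apply, ← finFunctionFinEquiv.sum_comp]
  simp only [mkron, of_apply, mi_finFunctionFinEquiv, mul_apply, Finset.prod_univ_sum,
    Fintype.piFinset_univ, Finset.prod_mul_distrib]

lemma mkron_one : mkron k (fun _ => (1 : Matrix (Fin n) (Fin n) ℝ)) = 1 := by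
  ext p q
  simp only [mkron, of_apply, one_apply]
  rw [Finset.prod_ite_zero, Finset.prod_const_one]
  simp only [Finset.mem_univ, forall_const, ← funext_iff, mi_injective.eq_iff]

lemma mkron_slot_apply (j : Fin k) (X : Matrix (Fin n) (Fin n) ℝ) (p q : Fin (n ^ k)) :
    mkron k (fun i => if i = j then X else 1) p q =
      X (mi p j) (mi q j) *
        ∏ i ∈ Finset.univ.erase j, (1 : Matrix (Fin n) (Fin n) ℝ) (mi p i) (mi q i) := by
  rw [mkron, of_apply, ← Finset.mul_prod_erase _ _ (Finset.mem_univ j), if_pos rfl]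
  congr 1
  exact Finset.prod_congr rfl fun i hi => by rw [if_neg (Finset.ne_of_mem_erase hi)]

def kronSlot (n k : ℕ) (j : Fin k) :
    Matrix (Fin n) (Fin n) ℝ →ₐ[ℝ] Matrix (Fin (n ^ k)) (Fin (n ^ k)) ℝ :=
  AlgHom.ofLinearMap
    { toFun := fun X => mkron k fun i => if i = j then X else 1
      map_add' := fun X Y => by ext p q; simp only [Matrix.add_apply, mkron_slot_apply]; ring
      map_smul' := fun c X => by
        ext p q
        simp only [Matrix.smul_apply, mkron_slot_apply, smul_eq_mul, RingHom.id_apply]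
        ring }
    (by simp only [LinearMap.coe_mk, AddHom.coe_mk, ite_self, mkron_one])
    (fun X Y => by
      simp only [LinearMap.coe_mk, AddHom.coe_mk, mkron_mul]
      congr 1; funext i; split_ifs <;> simp)

lemma kronSlot_apply (j : Fin k) (X : Matrix (Fin n) (Fin n) ℝ) :
    kronSlot n k j X = mkron k fun i => if i = j then X else 1 := rfl

lemma kronSlot_commute {j j' : Fin k} (h : j ≠ j') (X Y : Matrix (Fin n) (Fin n) ℝ) :
    Commute (kronSlot n k j X) (kronSlot n k j' Y) := by
  simp only [Commute, SemiconjBy, kronSlot_apply, mkron_mul]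
  congr 1; funext i
  by_cases hj : i = j <;> by_cases hj' : i = j' <;> simp_all

lemma noncommProd_kronSlot (X : Matrix (Fin n) (Fin n) ℝ) (s : Finset (Fin k))
    (h : (s : Set (Fin k)).Pairwise fun j j' => Commute (kronSlot n k j X) (kronSlot n k j' X)) :
    s.noncommProd (fun j => kronSlot n k j X) h = mkron k fun i => if i ∈ s then X else 1 := by
  induction s using Finset.induction with
  | empty => simp [mkron_one]
  | insert j s hj ih =>
    rw [Finset.noncommProd_insert_of_notMem _ _ _ _ hj, ih, kronSlot_apply, mkron_mul]
    congr 1; funext i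
    by_cases hi : i = j
    · simp [hi, hj]
    · simp [hi]

open scoped Matrix.Norms.Operator in
lemma exp_kronSlot (j : Fin k) (X : Matrix (Fin n) (Fin n) ℝ) :
    NormedSpace.exp (kronSlot n k j X) = kronSlot n k j (NormedSpace.exp X) :=
  (NormedSpace.map_exp (kronSlot n k j)
    (kronSlot n k j).toLinearMap.continuous_of_finiteDimensional X).symm

theorem exp_LkMat (A : Matrix (Fin n) (Fin n) ℝ) :
    NormedSpace.exp (LkMat A k) = mkron k fun _ => NormedSpace.exp A := by
  have hcomm : ((Finset.univ : Finset (Fin k)) : Set (Fin k)).Pairwise fun j j' =>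
      Commute (kronSlot n k j (NormedSpace.exp A)) (kronSlot n k j' (NormedSpace.exp A)) :=
    fun j _ j' _ h => kronSlot_commute h _ _
  calc NormedSpace.exp (LkMat A k) = NormedSpace.exp (∑ j, kronSlot n k j A) := rfl
    _ = Finset.univ.noncommProd (fun j => kronSlot n k j (NormedSpace.exp A)) hcomm := by
      rw [Matrix.exp_sum_of_commute _ _ fun j _ j' _ h => kronSlot_commute h _ _]
      exact Finset.noncommProd_congr rfl (fun j _ => exp_kronSlot j A) _
    _ = mkron k fun _ => NormedSpace.exp A := by
      simp only [noncommProd_kronSlot, Finset.mem_univ, if_true]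

lemma LkMat_smul (t : ℝ) (A : Matrix (Fin n) (Fin n) ℝ) : LkMat (t • A) k = t • LkMat A k := by
  simp only [LkMat, Finset.smul_sum, ← kronSlot_apply, map_smul]

end Kronecker

section ExpIntegral

variable {ι : Type*} [Fintype ι] [DecidableEq ι]

open scoped Matrix.Norms.Operator in
lemma continuous_exp_smul_apply (B : Matrix ι ι ℝ) (p q : ι) :
    Continuous fun t : ℝ => NormedSpace.exp (t • B) p q :=
  (NormedSpace.exp_continuous.comp (continuous_id.smul continuous_const)).matrix_elem p q

open scoped Matrix.Norms.Operator in
lemma hasDerivAt_exp_smul_apply (B : Matrix ι ι ℝ) (p q : ι) (t : ℝ) :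
    HasDerivAt (fun t : ℝ => NormedSpace.exp (t • B) p q)
      ((B * NormedSpace.exp (t • B)) p q) t :=
  (LinearMap.toContinuousLinearMap (entryLinearMap ℝ ℝ p q)).hasFDerivAt.comp_hasDerivAt t
    (hasDerivAt_exp_smul_const' B t)

theorem inv_eq_neg_integral_exp_smul (B : Matrix ι ι ℝ)
    (hint : ∀ p q, IntegrableOn (fun t : ℝ => NormedSpace.exp (t • B) p q) (Set.Ioi 0))
    (hlim : ∀ p q, Tendsto (fun t : ℝ => NormedSpace.exp (t • B) p q) atTop (𝓝 0)) :
    B⁻¹ = -of fun p q => ∫ t in Set.Ioi (0 : ℝ), NormedSpace.exp (t • B) p q := by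
  have hFTC (p q : ι) :
      ∫ t in Set.Ioi (0 : ℝ), (B * NormedSpace.exp (t • B)) p q = -(1 : Matrix ι ι ℝ) p q := by
    rw [integral_Ioi_of_hasDerivAt_of_tendsto' (fun t _ => hasDerivAt_exp_smul_apply B p q t)
      ?_ (hlim p q)]
    · simp
    · simp only [mul_apply]
      exact integrable_finsetSum _ fun r _ => (hint r q).const_mul _
  refine inv_eq_right_inv ?_
  ext p q
  calc (B * -of fun p q => ∫ t in Set.Ioi (0 : ℝ), NormedSpace.exp (t • B) p q) p q
      = -∫ t in Set.Ioi (0 : ℝ), ∑ r, B p r * NormedSpace.exp (t • B) r q := by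
        rw [Matrix.mul_neg, neg_apply, mul_apply, integral_finsetSum _ fun r _ =>
          (hint r q).const_mul _]
        simp only [of_apply, integral_const_mul]
    _ = (1 : Matrix ι ι ℝ) p q := by simp only [← mul_apply, hFTC, neg_neg]

end ExpIntegral

section BanachAlgebra

variable {𝔸 : Type*} [NormedRing 𝔸] [NormedAlgebra ℝ 𝔸] [CompleteSpace 𝔸]

theorem isBigO_exp_smul_of_norm_exp_lt_one {x : 𝔸} {T : ℝ} (hT : 0 < T)
    (h : ‖NormedSpace.exp (T • x)‖ < 1) :
    ∃ δ > 0, (fun t : ℝ => NormedSpace.exp (t • x)) =O[atTop] fun t => Real.exp (-δ * t) := by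
  let : NormedAlgebra ℚ 𝔸 := NormedAlgebra.restrictScalars ℚ ℝ 𝔸
  set ρ := max ‖NormedSpace.exp (T • x)‖ (1 / 2)
  have hρ0 : 0 < ρ := lt_max_of_lt_right (by norm_num)
  have hρ1 : ρ < 1 := max_lt h (by norm_num)
  obtain ⟨K, hK⟩ := (isCompact_Icc (a := -T) (b := 0)).exists_bound_of_continuousOn
    (f := fun s : ℝ => NormedSpace.exp (s • x))
    (NormedSpace.exp_continuous.comp (continuous_id.smul continuous_const)).continuousOn
  refine ⟨-Real.log ρ / T, div_pos (neg_pos.2 (Real.log_neg hρ0 hρ1)) hT, .of_bound K ?_⟩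
  filter_upwards [eventually_ge_atTop 0] with t ht
  -- `t = q T + s` with `q ≥ 1`, so that `‖a ^ q‖ ≤ ‖a‖ ^ q` holds without `‖1‖ ≤ 1`
  set q := ⌊t / T⌋₊ + 1
  have hq : t / T < q := by simpa [q] using Nat.lt_floor_add_one (t / T)
  have hqT : q * T ≤ t + T := by
    have := Nat.floor_le (div_nonneg ht hT.le)
    simp only [q, Nat.cast_add, Nat.cast_one, add_mul, one_mul]
    linarith [(le_div_iff₀ hT).1 this]
  have hsplit : NormedSpace.exp (t • x) =
      NormedSpace.exp (T • x) ^ q * NormedSpace.exp ((t - q * T) • x) := by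
    rw [← NormedSpace.exp_nsmul, ← NormedSpace.exp_add_of_commute
      (Commute.smul_left (((Commute.refl x).smul_left T).smul_right _) q),
      ← Nat.cast_smul_eq_nsmul ℝ, smul_smul, ← add_smul, add_sub_cancel]
  have hρq : ρ ^ q ≤ Real.exp (-(-Real.log ρ / T) * t) := by
    rw [← Real.rpow_natCast, show -(-Real.log ρ / T) * t = Real.log ρ * (t / T) by ring,
      ← Real.rpow_def_of_pos hρ0]
    exact Real.rpow_le_rpow_of_exponent_ge hρ0 hρ1.le hq.le
  calc ‖NormedSpace.exp (t • x)‖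
      ≤ ‖NormedSpace.exp (T • x)‖ ^ q * ‖NormedSpace.exp ((t - q * T) • x)‖ := by
        rw [hsplit]
        exact (norm_mul_le _ _).trans
          (mul_le_mul_of_nonneg_right (norm_pow_le' _ (Nat.succ_pos _)) (norm_nonneg _))
    _ ≤ ρ ^ q * K := by
        gcongr
        · exact le_max_left _ _
        · refine hK _ ⟨?_, ?_⟩
          · linarith
          · linarith [(div_lt_iff₀ hT).1 hq]
    _ ≤ K * ‖Real.exp (-(-Real.log ρ / T) * t)‖ := by
        rw [Real.norm_of_nonneg (Real.exp_pos _).le, mul_comm]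
        exact mul_le_mul_of_nonneg_left hρq ((norm_nonneg _).trans (hK 0 ⟨by linarith, le_rfl⟩))

end BanachAlgebra

lemma exists_norm_pow_lt_one {A : Type*} [NormedRing A] [NormedAlgebra ℂ A] [CompleteSpace A]
    {a : A} (h : ∀ z ∈ spectrum ℂ a, ‖z‖ < 1) : ∃ m : ℕ, 0 < m ∧ ‖a ^ m‖ < 1 := by
  rcases subsingleton_or_nontrivial A with hA | hA
  · exact ⟨1, one_pos, by simp [Subsingleton.elim (a ^ 1) 0]⟩
  have hr : spectralRadius ℂ a < 1 := by
    exact_mod_cast spectrum.spectralRadius_lt_of_forall_lt a (r := 1)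
      fun z hz => by exact_mod_cast h z hz
  obtain ⟨m, hm, hm1⟩ := ((spectrum.pow_norm_pow_one_div_tendsto_nhds_spectralRadius a
    |>.eventually_lt_const hr).and (eventually_ge_atTop 1)).exists
  refine ⟨m, hm1, not_le.1 fun h1 => ?_⟩
  rw [ENNReal.ofReal_lt_one] at hm
  exact hm.not_ge (Real.one_le_rpow h1 (by positivity))

section MatrixExp

variable {ι : Type*} [Fintype ι] [DecidableEq ι]

lemma pow_mulVec_of_mulVec_eq_smul {R : Type*} [CommRing R] {M : Matrix ι ι R} {μ : R}
    {v : ι → R} (h : M *ᵥ v = μ • v) (m : ℕ) : (M ^ m) *ᵥ v = μ ^ m • v := by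
  induction m with
  | zero => simp
  | succ m ih =>
    rw [pow_succ, ← mulVec_mulVec, h, mulVec_smul, ih, smul_smul, pow_succ, mul_comm]

lemma exp_mulVec_of_mulVec_eq_smul {𝕂 : Type*} [RCLike 𝕂] {M : Matrix ι ι 𝕂} {μ : 𝕂}
    {v : ι → 𝕂} (h : M *ᵥ v = μ • v) :
    NormedSpace.exp M *ᵥ v = NormedSpace.exp μ • v := by
  open scoped Matrix.Norms.Operator in
  let L : Matrix ι ι 𝕂 →L[𝕂] (ι → 𝕂) :=
    LinearMap.toContinuousLinearMap ((mulVecBilin 𝕂 𝕂).flip v)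
  refine ((NormedSpace.exp_series_hasSum_exp' (𝕂 := 𝕂) M).mapL L).unique ?_
  convert (NormedSpace.exp_series_hasSum_exp' (𝕂 := 𝕂) μ).smul_const v using 1
  funext m
  simp [L, pow_mulVec_of_mulVec_eq_smul h, smul_smul]

theorem spectrum_exp_subset (M : Matrix ι ι ℂ) :
    spectrum ℂ (NormedSpace.exp M) ⊆ Complex.exp '' spectrum ℂ M := by
  intro z hz
  rw [← spectrum_toLin', ← Module.End.hasEigenvalue_iff_mem_spectrum] at hz
  have hcomm : Commute (toLin' (NormedSpace.exp M)) (toLin' M) := by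
    open scoped Matrix.Norms.Operator in
    exact ((Commute.refl M).exp_left).map toLinAlgEquiv'
  have hV := Module.End.mapsTo_genEigenspace_of_comm hcomm z 1
  have : Nontrivial (Module.End.eigenspace (toLin' (NormedSpace.exp M)) z) :=
    Submodule.nontrivial_iff_ne_bot.2 hz
  obtain ⟨μ, hμ⟩ := Module.End.exists_eigenvalue ((toLin' M).restrict hV)
  obtain ⟨w, hw, hw0⟩ := hμ.exists_hasEigenvector
  have hMw : M *ᵥ (w : ι → ℂ) = μ • (w : ι → ℂ) :=
    congr_arg Subtype.val (Module.End.mem_eigenspace_iff.1 hw)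
  have hEw : NormedSpace.exp M *ᵥ (w : ι → ℂ) = z • (w : ι → ℂ) :=
    Module.End.mem_eigenspace_iff.1 w.2
  have hw0' : (w : ι → ℂ) ≠ 0 := by simpa using hw0
  refine ⟨μ, ?_, ?_⟩
  · rw [← spectrum_toLin', ← Module.End.hasEigenvalue_iff_mem_spectrum]
    exact Module.End.hasEigenvalue_of_hasEigenvector ⟨Module.End.mem_eigenspace_iff.2 hMw, hw0'⟩
  · rw [Complex.exp_eq_exp_ℂ]
    exact smul_left_injective ℂ hw0' ((exp_mulVec_of_mulVec_eq_smul hMw).symm.trans hEw)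

open scoped Matrix.Norms.Operator in
theorem isBigO_exp_smul_apply_of_re_neg (M : Matrix ι ι ℂ)
    (hM : ∀ z ∈ spectrum ℂ M, z.re < 0) :
    ∃ δ > 0, ∀ a b, (fun t : ℝ => NormedSpace.exp (t • M) a b) =O[atTop]
      fun t => Real.exp (-δ * t) := by
  obtain ⟨m, hm, hlt⟩ := exists_norm_pow_lt_one (a := NormedSpace.exp M) fun z hz => by
    obtain ⟨μ, hμ, rfl⟩ := spectrum_exp_subset M hz
    simpa [Complex.norm_exp] using hM μ hμ
  rw [← Matrix.exp_nsmul, ← Nat.cast_smul_eq_nsmul ℝ] at hlt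
  obtain ⟨δ, hδ, hO⟩ := isBigO_exp_smul_of_norm_exp_lt_one (Nat.cast_pos.2 hm) hlt
  exact ⟨δ, hδ, fun a b =>
    ((LinearMap.toContinuousLinearMap (entryLinearMap ℂ ℂ a b)).isBigO_comp _ _).trans hO⟩

lemma exp_map_ofReal (A : Matrix ι ι ℝ) :
    (NormedSpace.exp A).map (algebraMap ℝ ℂ) = NormedSpace.exp (A.map (algebraMap ℝ ℂ)) := by
  open scoped Matrix.Norms.Operator in
  exact NormedSpace.map_exp (algebraMap ℝ ℂ).mapMatrix
    (continuous_id.matrix_map Complex.continuous_ofReal) A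

end MatrixExp

theorem StableMat.isBigO_exp_smul_apply {n : ℕ} {A : Matrix (Fin n) (Fin n) ℝ}
    (hA : StableMat A) :
    ∃ δ > 0, ∀ a b, (fun t : ℝ => NormedSpace.exp (t • A) a b) =O[atTop]
      fun t => Real.exp (-δ * t) := by
  obtain ⟨δ, hδ, hO⟩ := isBigO_exp_smul_apply_of_re_neg (A.map (algebraMap ℝ ℂ))
    fun z hz => hA z (mem_spectrum_iff_isRoot_charpoly.1 hz)
  refine ⟨δ, hδ, fun a b => ((hO a b).norm_left.congr_left fun t => ?_).of_norm_left⟩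
  have : (t • A).map (algebraMap ℝ ℂ) = t • A.map (algebraMap ℝ ℂ) := by
    ext; simp [Complex.real_smul]
  rw [← this, ← exp_map_ofReal, map_apply, norm_algebraMap']

lemma isBigO_mkron_apply {n k : ℕ} {F : ℝ → Matrix (Fin n) (Fin n) ℝ} {δ : ℝ}
    (hF : ∀ a b, (fun t => F t a b) =O[atTop] fun t => Real.exp (-δ * t)) (p q : Fin (n ^ k)) :
    (fun t => mkron k (fun _ => F t) p q) =O[atTop] fun t => Real.exp (-(k * δ) * t) := by
  refine (IsBigO.finsetProd (s := Finset.univ) fun i _ => hF (mi p i) (mi q i)).congr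
    (fun t => rfl) fun t => ?_
  rw [Finset.prod_const, Finset.card_univ, Fintype.card_fin, ← Real.exp_nat_mul]
  ring_nf

/-- If all eigenvalues of `A` have negative real part, then the
matrix-valued integral `∫₀^∞ exp(tA) ⊗ ⋯ ⊗ exp(tA) dt` converges (entrywise) and
`L_k(A)⁻¹ = -∫₀^∞ exp(tA) ⊗ ⋯ ⊗ exp(tA) dt`. -/
theorem LkMat_inv_eq_neg_integral
    {n k : ℕ} (hk : 1 ≤ k)
    (A : Matrix (Fin n) (Fin n) ℝ) (hA : StableMat A) :
    (∀ p q : Fin (n ^ k),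
      MeasureTheory.IntegrableOn
        (fun t : ℝ => mkron k (fun _ => NormedSpace.exp (t • A)) p q)
        (Set.Ioi 0)) ∧
    (LkMat A k)⁻¹ =
      -Matrix.of fun p q =>
        ∫ t in Set.Ioi (0 : ℝ), mkron k (fun _ => NormedSpace.exp (t • A)) p q := by
  obtain ⟨δ, hδ, hexpA⟩ := hA.isBigO_exp_smul_apply
  have hkδ : 0 < k * δ := mul_pos (by exact_mod_cast hk) hδ
  have hexp (t : ℝ) :
      mkron k (fun _ => NormedSpace.exp (t • A)) = NormedSpace.exp (t • LkMat A k) := by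
    rw [← LkMat_smul, exp_LkMat]
  have hO (p q : Fin (n ^ k)) : (fun t : ℝ => NormedSpace.exp (t • LkMat A k) p q) =O[atTop]
      fun t => Real.exp (-(k * δ) * t) := by
    simpa only [hexp] using isBigO_mkron_apply hexpA p q
  have hint (p q : Fin (n ^ k)) := integrable_of_isBigO_exp_neg (a := 0) hkδ
    (continuous_exp_smul_apply _ p q).continuousOn (hO p q)
  have hlim (p q : Fin (n ^ k)) := (hO p q).trans_tendsto <|
    Real.tendsto_exp_atBot.comp (tendsto_id.const_mul_atTop_of_neg (neg_neg_iff_pos.2 hkδ))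
  simp only [hexp]
  exact ⟨hint, inv_eq_neg_integral_exp_smul _ hint hlim⟩

end LPO
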